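/- arXiv:2111.01518 — 8 statements merged into one kernel-verified Lean document; each statement's English description precedes it below -/
import Mathlib

section
/- Let P be a non-constant real polynomial whose coefficients are rationally independent (i.e., no nontrivial integer combination of the coefficients is an integer), let Q be any real polynomial, and let p be an integer polynomial with deg(p) ≥ 2. Then the polynomial P + Q ∘ p has at least one non-constant coefficient that is irrational. -/
open Polynomial

/-- The coefficients of `P` (including the constant term) are rationally independent:
no nontrivial integer combination of them is an integer. -/
def RatIndepCoeffs (P : ℝ[X]) : Prop :=
  ∀ c : ℕ → ℤ, (∀ i, P.natDegree < i → c i = 0) →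
    (∃ k : ℤ, (∑ i ∈ Finset.range (P.natDegree + 1), (c i : ℝ) * P.coeff i) = (k : ℝ)) →
    ∀ i, c i = 0

lemma aux_den_mul (q : ℚ) (t : ℤ) :
    ((t * q.num : ℤ) : ℚ) = (((q.den : ℤ) * t : ℤ) : ℚ) * q := by
  have hd : ((q.den : ℚ)) ≠ 0 := by exact_mod_cast q.den_nz
  have h1 : (q.num : ℚ) = q * (q.den : ℚ) := (div_eq_iff hd).mp (Rat.num_div_den q)
  push_cast
  rw [h1]; ring

/-- The family `1, P.coeff 1, ..., P.coeff d` (with `1` at index 0) is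
`ℚ`-linearly independent. -/
lemma aux_li (P : ℝ[X]) (hPind : RatIndepCoeffs P) :
    LinearIndependent ℚ (fun i : Fin (P.natDegree + 1) =>
      if (i : ℕ) = 0 then (1 : ℝ) else P.coeff i) := by
  set d := P.natDegree with hd
  set v : Fin (d + 1) → ℝ := fun i => if (i : ℕ) = 0 then (1 : ℝ) else P.coeff i with hv
  rw [Fintype.linearIndependent_iff]
  intro g hg
  set D : ℤ := ∏ i : Fin (d + 1), ((g i).den : ℤ) with hD
  have hDne : D ≠ 0 := by
    apply Finset.prod_ne_zero_iff.mpr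
    intro i _
    exact_mod_cast (g i).den_nz
  have hm : ∀ i : Fin (d + 1), ∃ m : ℤ, (m : ℚ) = (D : ℚ) * g i := by
    intro i
    obtain ⟨t, ht⟩ : ((g i).den : ℤ) ∣ D := Finset.dvd_prod_of_mem _ (Finset.mem_univ i)
    exact ⟨t * (g i).num, by rw [aux_den_mul (g i) t, ← ht]⟩
  choose m hmq using hm
  set c : ℕ → ℤ := fun i => if h : i < d + 1 then (if i = 0 then 0 else m ⟨i, h⟩) else 0 with hc
  have hcsupp : ∀ i, P.natDegree < i → c i = 0 := by
    intro i hi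
    simp only [hc]
    rw [dif_neg (by omega)]
  -- the real-valued sum identity
  have hsmul : ∀ (q : ℚ) (x : ℝ), q • x = (q : ℝ) * x := fun q x => Rat.smul_def q x
  have hT : ∑ i : Fin (d + 1), ((m i : ℚ) : ℝ) * v i = 0 := by
    have : ∑ i : Fin (d + 1), ((m i : ℚ) : ℝ) * v i
        = (D : ℝ) * ∑ i : Fin (d + 1), g i • v i := by
      rw [Finset.mul_sum]
      refine Finset.sum_congr rfl fun i _ => ?_
      rw [hmq i, hsmul]
      push_cast
      ring
    rw [this, hg, mul_zero]
  have hdiff : ∑ i : Fin (d + 1), (((m i : ℚ) : ℝ) * v i - (c i.val : ℝ) * P.coeff i.val)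
      = ((m 0 : ℚ) : ℝ) := by
    rw [Finset.sum_eq_single (0 : Fin (d + 1))]
    · simp [hc, hv]
    · intro i _ hine
      have hival : (i : ℕ) ≠ 0 := by
        intro hcon
        exact hine (Fin.ext hcon)
      simp only [hc, hv]
      rw [if_neg hival, dif_pos i.isLt, if_neg hival, Fin.eta]
      push_cast
      ring
    · intro hcon
      exact absurd (Finset.mem_univ _) hcon
  have hS : ∑ i ∈ Finset.range (d + 1), (c i : ℝ) * P.coeff i = ((-(m 0) : ℤ) : ℝ) := by
    have hsplit : ∑ i : Fin (d + 1), ((m i : ℚ) : ℝ) * v i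
        - ∑ i : Fin (d + 1), (c i.val : ℝ) * P.coeff i.val = ((m 0 : ℚ) : ℝ) := by
      rw [← Finset.sum_sub_distrib]; exact hdiff
    have hconv : ∑ i ∈ Finset.range (d + 1), (c i : ℝ) * P.coeff i
        = ∑ i : Fin (d + 1), (c i.val : ℝ) * P.coeff i.val := by
      rw [Finset.sum_range fun i => (c i : ℝ) * P.coeff i]
    rw [hconv]
    rw [hT] at hsplit
    push_cast at hsplit ⊢
    linarith [hsplit]
  have hcall : ∀ i, c i = 0 := hPind c hcsupp ⟨-(m 0), hS⟩
  -- conclude g i = 0 for i ≠ 0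
  have hgz : ∀ i : Fin (d + 1), i ≠ 0 → g i = 0 := by
    intro i hine
    have hival : (i : ℕ) ≠ 0 := fun hcon => hine (Fin.ext hcon)
    have hci : c i.val = m i := by
      simp only [hc]
      rw [dif_pos i.isLt, if_neg hival, Fin.eta]
    have hmi : m i = 0 := by rw [← hci]; exact hcall i.val
    have : (D : ℚ) * g i = 0 := by rw [← hmq i, hmi]; norm_num
    rcases mul_eq_zero.mp this with h | h
    · exact absurd (by exact_mod_cast h) hDne
    · exact h
  intro i
  by_cases hi0 : i = 0
  · subst hi0
    have : ∑ i : Fin (d + 1), g i • v i = g 0 • v 0 := by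
      rw [Finset.sum_eq_single (0 : Fin (d + 1))]
      · intro b _ hb; rw [hgz b hb, zero_smul]
      · intro hcon; exact absurd (Finset.mem_univ _) hcon
    rw [this] at hg
    have hv0 : v 0 = 1 := by simp [hv]
    rw [hv0, smul_eq_zero] at hg
    rcases hg with h | h
    · exact h
    · exact absurd h one_ne_zero
  · exact hgz i hi0

/-- If `P` is a non-constant real polynomial with rationally independent coefficients,
`Q` is any real polynomial, and `p` is an integer polynomial with `deg p ≥ 2`, then
`P + Q ∘ p` has at least one irrational non-constant coefficient. -/
theorem stmt0 (P Q : ℝ[X]) (p : ℤ[X]) (hPdeg : 0 < P.natDegree)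
    (hPind : RatIndepCoeffs P) (hp : 2 ≤ p.natDegree) :
    ∃ j, 1 ≤ j ∧ Irrational ((P + Q.comp (p.map (Int.castRingHom ℝ))).coeff j) := by
  by_contra hcon
  push_neg at hcon
  set d := P.natDegree with hdd
  set e := Q.natDegree with hee
  set pr := p.map (Int.castRingHom ℝ) with hpr
  set v : Fin (d + 1) → ℝ := fun i => if (i : ℕ) = 0 then (1 : ℝ) else P.coeff i with hv
  have hli : LinearIndependent ℚ v := aux_li P hPind
  have hinj : Function.Injective v := hli.injective
  have sli : LinearIndepOn ℚ id (Set.range v) := (linearIndepOn_id_range_iff hinj).mpr hli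
  set B := Module.Basis.extend sli with hB
  set φ : ℝ →ₗ[ℚ] ℚ :=
    B.constr ℕ (fun x => if (x : ℝ) = P.coeff 1 then (1 : ℚ) else 0) with hphi
  have hφv : ∀ i : Fin (d + 1), φ (v i) = if v i = P.coeff 1 then 1 else 0 := by
    intro i
    have hx : v i ∈ sli.extend (Set.subset_univ _) :=
      sli.subset_extend _ (Set.mem_range_self i)
    have hBx : v i = B ⟨v i, hx⟩ := (Module.Basis.extend_apply_self sli ⟨v i, hx⟩).symm
    rw [hphi, hBx, Module.Basis.constr_basis]
    simp [hB, Module.Basis.extend_apply_self]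
  have hd1 : 1 < d + 1 := by omega
  have hv1 : v ⟨1, hd1⟩ = P.coeff 1 := if_neg one_ne_zero
  have hφ1 : φ (P.coeff 1) = 1 := by
    rw [← hv1, hφv ⟨1, hd1⟩, if_pos hv1]
  have hφone : φ (1 : ℝ) = 0 := by
    have hv0 : v ⟨0, by omega⟩ = 1 := if_pos rfl
    have hne : (1 : ℝ) ≠ P.coeff 1 := by
      intro heq
      have h1 : v ⟨0, by omega⟩ = v ⟨1, hd1⟩ := by rw [hv0, hv1, heq]
      have h2 : (0 : ℕ) = 1 := congrArg Fin.val (hinj h1)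
      omega
    rw [← hv0, hφv ⟨0, by omega⟩, if_neg (by rw [hv0]; exact hne)]
  have hφrat : ∀ r : ℚ, φ ((r : ℝ)) = 0 := by
    intro r
    rw [← Rat.smul_one_eq_cast ℝ r, map_smul, hφone, smul_zero]
  have hφcoeff : ∀ j : ℕ, 2 ≤ j → φ (P.coeff j) = 0 := by
    intro j hj
    by_cases hjd : j ≤ d
    · have hjlt : j < d + 1 := by omega
      have hvj : v ⟨j, hjlt⟩ = P.coeff j := if_neg (by simp; omega)
      have hne : P.coeff j ≠ P.coeff 1 := by
        intro heq
        have h1 : v ⟨j, hjlt⟩ = v ⟨1, hd1⟩ := by rw [hvj, hv1, heq]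
        have h2 : j = 1 := congrArg Fin.val (hinj h1)
        omega
      rw [← hvj, hφv ⟨j, hjlt⟩, if_neg (by rw [hvj]; exact hne)]
    · rw [coeff_eq_zero_of_natDegree_lt (by omega), map_zero]
  have hcompcoeff : ∀ j, (Q.comp pr).coeff j
      = ∑ k ∈ Finset.range (e + 1), Q.coeff k * ((p ^ k).coeff j : ℝ) := by
    intro j
    rw [comp_eq_sum_left,
      Polynomial.sum_over_range' Q (fun n => by simp) (e + 1) (lt_add_one _),
      Polynomial.finset_sum_coeff]
    refine Finset.sum_congr rfl fun k _ => ?_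
    rw [coeff_C_mul, hpr, ← Polynomial.map_pow, coeff_map]
    simp
  have key : ∀ j : ℕ, 1 ≤ j → φ (P.coeff j)
      + ∑ k ∈ Finset.range (e + 1), (((p ^ k).coeff j : ℤ) : ℚ) * φ (Q.coeff k) = 0 := by
    intro j hj
    have hmem : (P + Q.comp pr).coeff j ∈ Set.range ((↑) : ℚ → ℝ) :=
      not_not.mp (hcon j hj)
    obtain ⟨r, hr⟩ := hmem
    have h1 : φ ((P + Q.comp pr).coeff j) = 0 := by rw [← hr]; exact hφrat r
    rw [coeff_add, hcompcoeff j, map_add, map_sum] at h1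
    rw [← h1]
    congr 1
    refine Finset.sum_congr rfl fun k _ => ?_
    rw [show Q.coeff k * (((p ^ k).coeff j : ℤ) : ℝ)
        = ((p ^ k).coeff j : ℤ) • Q.coeff k by rw [zsmul_eq_mul]; ring,
      map_zsmul, zsmul_eq_mul]
  set pq := p.map (Int.castRingHom ℚ) with hpq
  set F : ℚ[X] := ∑ k ∈ Finset.range (e + 1), C (φ (Q.coeff k)) * X ^ k with hF
  have hGsum : F.comp pq = ∑ k ∈ Finset.range (e + 1), C (φ (Q.coeff k)) * pq ^ k := by
    rw [hF]
    simp [Polynomial.comp, eval₂_finset_sum]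
  have hGcoeff : ∀ j, (F.comp pq).coeff j
      = ∑ k ∈ Finset.range (e + 1), (((p ^ k).coeff j : ℤ) : ℚ) * φ (Q.coeff k) := by
    intro j
    rw [hGsum, Polynomial.finset_sum_coeff]
    refine Finset.sum_congr rfl fun k _ => ?_
    rw [coeff_C_mul, hpq, ← Polynomial.map_pow, coeff_map]
    simp [mul_comm]
  have hG1 : (F.comp pq).coeff 1 = -1 := by
    have hk := key 1 le_rfl
    rw [hφ1] at hk
    rw [hGcoeff]
    linarith
  have hGhigh : ∀ N : ℕ, 1 < N → (F.comp pq).coeff N = 0 := by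
    intro N hN
    have hk := key N (by omega)
    rw [hφcoeff N (by omega), zero_add] at hk
    rw [hGcoeff]
    exact hk
  have hGdeg : (F.comp pq).natDegree = 1 :=
    le_antisymm (natDegree_le_iff_coeff_eq_zero.mpr hGhigh)
      (le_natDegree_of_ne_zero (by rw [hG1]; norm_num))
  have hpqdeg : pq.natDegree = p.natDegree :=
    natDegree_map_eq_of_injective Int.cast_injective p
  have hmul : F.natDegree * p.natDegree = 1 := by
    rw [← hpqdeg, ← natDegree_comp, hGdeg]
  have h2 : p.natDegree ≤ 1 := Nat.le_of_dvd one_pos ⟨F.natDegree, by rw [mul_comm]; omega⟩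
  omega
end

section
/- Let Q ∈ ℝ[t] have at least one irrational non-constant coefficient, and let p ∈ ℤ[t] with deg(p) ≥ 2. Then the composition Q ∘ p has at least one irrational non-constant coefficient. -/
open Polynomial

/-! Let `j` be the largest index with `Q.coeff j` irrational and look at the coefficient of
`t ^ (j * deg p)` in `Q ∘ p = ∑ Q.coeff i * p ^ i`. The powers `p ^ i` with `i < j` have
smaller degree; for `i > j` the term is rational, since `Q.coeff i ∈ ℚ` and `p ^ i ∈ ℤ[t]`;
and the term `i = j` is `Q.coeff j * lc(p) ^ j`, an irrational number. -/

namespace Polynomial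

theorem exists_greatest_coeff_of_not_zero {R : Type*} [Semiring R] {P : R → Prop}
    (hP : ¬P 0) (Q : R[X]) {j₀ : ℕ} (hj₀ : P (Q.coeff j₀)) :
    ∃ j, j₀ ≤ j ∧ P (Q.coeff j) ∧ ∀ i, j < i → ¬P (Q.coeff i) := by
  classical
  have hj₀deg : j₀ ≤ Q.natDegree :=
    le_natDegree_of_ne_zero fun h => hP (h ▸ hj₀)
  refine ⟨Nat.findGreatest (fun i => P (Q.coeff i)) Q.natDegree,
    Nat.le_findGreatest hj₀deg hj₀, Nat.findGreatest_spec (P := fun i => P (Q.coeff i)) hj₀deg hj₀,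
    fun i hi => ?_⟩
  rcases le_or_gt i Q.natDegree with hi' | hi'
  · exact Nat.findGreatest_is_greatest hi hi'
  · rwa [coeff_eq_zero_of_natDegree_lt hi']

theorem coeff_comp_natDegree_mul {R : Type*} [Semiring R] (Q f : R[X]) (j : ℕ)
    (hf : 0 < f.natDegree) :
    (Q.comp f).coeff (j * f.natDegree) = Q.coeff j * f.leadingCoeff ^ j +
      ∑ i ∈ Q.support with j < i, Q.coeff i * (f ^ i).coeff (j * f.natDegree) := by
  classical
  have hlow : ∀ i < j, (f ^ i).coeff (j * f.natDegree) = 0 := fun i hi =>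
    coeff_eq_zero_of_natDegree_lt <|
      natDegree_pow_le.trans_lt (Nat.mul_lt_mul_of_pos_right hi hf)
  rw [comp_eq_sum_left, Polynomial.sum, finsetSum_coeff, add_comm,
    ← Finset.sum_filter_add_sum_filter_not _ (j < ·)]
  congr 1
  · simp only [coeff_C_mul]
  · rw [Finset.sum_eq_single j, coeff_C_mul, coeff_pow_mul_natDegree]
    · intro i hi hne
      have hij : i < j := lt_of_le_of_ne (not_lt.mp (Finset.mem_filter.mp hi).2) hne
      rw [coeff_C_mul, hlow i hij, mul_zero]
    · intro hj
      have : Q.coeff j = 0 := by simpa using hj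
      rw [coeff_C_mul, this, zero_mul]

theorem irrational_coeff_comp_map_intCast {Q : ℝ[X]} {p : ℤ[X]} {j : ℕ}
    (hp : 0 < p.natDegree) (hj : Irrational (Q.coeff j))
    (hrat : ∀ i, j < i → ¬Irrational (Q.coeff i)) :
    Irrational ((Q.comp (p.map (Int.castRingHom ℝ))).coeff (j * p.natDegree)) := by
  set f := p.map (Int.castRingHom ℝ)
  have hf : f.natDegree = p.natDegree := natDegree_map_eq_of_injective (RingHom.injective_int _) p
  have hlc : f.leadingCoeff ^ j = ((p.leadingCoeff ^ j : ℤ) : ℝ) := by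
    rw [leadingCoeff_map_of_injective (RingHom.injective_int _)]
    push_cast
    rfl
  have hrest : ∑ i ∈ Q.support with j < i, Q.coeff i * (f ^ i).coeff (j * f.natDegree) ∈
      (Rat.castHom ℝ).range := by
    refine Subring.sum_mem _ fun i hi => Subring.mul_mem _ ?_ ?_
    · simpa [Irrational] using hrat i (Finset.mem_filter.mp hi).2
    · rw [← Polynomial.map_pow, coeff_map]
      exact ⟨(p ^ i).coeff (j * f.natDegree), by simp⟩
  obtain ⟨q, hq⟩ := hrest
  rw [← hf, coeff_comp_natDegree_mul Q f j (hf ▸ hp), ← hq, hlc]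
  refine (hj.mul_intCast (pow_ne_zero _ ?_)).add_ratCast q
  exact leadingCoeff_ne_zero.mpr (ne_zero_of_natDegree_gt hp)

end Polynomial

/-- If `Q ∈ ℝ[t]` has at least one irrational non-constant coefficient and `p ∈ ℤ[t]` has
`deg p ≥ 2`, then `Q ∘ p` has at least one irrational non-constant coefficient. -/
theorem stmt1 (Q : ℝ[X]) (p : ℤ[X]) (hQ : ∃ j, 1 ≤ j ∧ Irrational (Q.coeff j))
    (hp : 2 ≤ p.natDegree) :
    ∃ j, 1 ≤ j ∧ Irrational ((Q.comp (p.map (Int.castRingHom ℝ))).coeff j) := by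
  obtain ⟨j₀, hj₀, hirr⟩ := hQ
  obtain ⟨j, hj₀j, hj, hgt⟩ := exists_greatest_coeff_of_not_zero not_irrational_zero Q hirr
  exact ⟨j * p.natDegree, Nat.mul_pos (by omega) (by omega),
    irrational_coeff_comp_map_intCast (by omega) hj hgt⟩
end

section
/- Let T(x) = S(x) + b be an ergodic unipotent affine transformation of 𝕋^m, where S is a unipotent automorphism of 𝕋^m and b ∈ 𝕋^m. Then for Lebesgue-almost every x ∈ 𝕋^m the following holds: for every non-zero k ∈ ℤ^m, the non-constant coefficients of the polynomial n ↦ k · T^n x (a polynomial in n with values in 𝕋, of degree at most m) are rationally independent. -/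
open MeasureTheory Filter

/-- The `m`-dimensional torus `𝕋^m`. -/
abbrev Torus (m : ℕ) := Fin m → UnitAddCircle

/-- The pairing `k · x = Σ kᵢ xᵢ ∈ 𝕋` between `ℤ^m` and `𝕋^m`. -/
noncomputable def zdot {m : ℕ} (k : Fin m → ℤ) (x : Torus m) : UnitAddCircle :=
  ∑ i, k i • x i

/-- Action of an integer matrix on the torus `𝕋^m`. -/
noncomputable def matAct {m : ℕ} (S : Matrix (Fin m) (Fin m) ℤ) (x : Torus m) : Torus m :=
  fun i => ∑ j, S i j • x j

/-- The `j`-th non-constant coefficient (in the binomial basis) of the polynomial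
`n ↦ k · Tⁿ x` for the affine map `T x = S x + b`:
`cⱼ = ((Sᵗ − 1)ʲ k) · x + ((Sᵗ − 1)^{j−1} k) · b`. -/
noncomputable def coefC {m : ℕ} (S : Matrix (Fin m) (Fin m) ℤ) (b : Torus m)
    (k : Fin m → ℤ) (x : Torus m) (j : ℕ) : UnitAddCircle :=
  zdot (((S.transpose - 1) ^ j).mulVec k) x + zdot (((S.transpose - 1) ^ (j - 1)).mulVec k) b

/- ### Auxiliary lemmas -/

instance : IsProbabilityMeasure (volume : Measure UnitAddCircle) :=
  ⟨UnitAddCircle.measure_univ⟩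

lemma zdot_add_left {m : ℕ} (k l : Fin m → ℤ) (x : Torus m) :
    zdot (k + l) x = zdot k x + zdot l x := by
  simp [zdot, add_smul, Finset.sum_add_distrib]

/-- `zdot · x` as an additive monoid hom. -/
noncomputable def zdotHom {m : ℕ} (x : Torus m) : (Fin m → ℤ) →+ UnitAddCircle :=
  AddMonoidHom.mk' (fun k => zdot k x) (fun k l => zdot_add_left k l x)

lemma zdot_smul_left {m : ℕ} (n : ℤ) (k : Fin m → ℤ) (x : Torus m) :
    zdot (n • k) x = n • zdot k x :=
  map_zsmul (zdotHom x) n k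

lemma zdot_sum_left {m : ℕ} {ι : Type*} (s : Finset ι) (f : ι → (Fin m → ℤ)) (x : Torus m) :
    zdot (∑ j ∈ s, f j) x = ∑ j ∈ s, zdot (f j) x :=
  map_sum (zdotHom x) f s

lemma zdot_add_right {m : ℕ} (k : Fin m → ℤ) (x y : Torus m) :
    zdot k (x + y) = zdot k x + zdot k y := by
  simp [zdot, smul_add, Finset.sum_add_distrib]

lemma zdot_zero_left {m : ℕ} (x : Torus m) : zdot (0 : Fin m → ℤ) x = 0 := by
  simp [zdot]

lemma zdot_matAct {m : ℕ} (k : Fin m → ℤ) (S : Matrix (Fin m) (Fin m) ℤ) (x : Torus m) :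
    zdot k (matAct S x) = zdot (S.transpose.mulVec k) x := by
  unfold zdot matAct Matrix.mulVec dotProduct
  simp only [Finset.smul_sum, smul_smul, Finset.sum_smul]
  rw [Finset.sum_comm]
  refine Finset.sum_congr rfl fun j _ => Finset.sum_congr rfl fun i _ => ?_
  rw [Matrix.transpose_apply, mul_comm]

lemma zdot_continuous {m : ℕ} (v : Fin m → ℤ) : Continuous (zdot v) := by
  exact continuous_finset_sum _ fun i _ => (continuous_zsmul (v i)).comp (continuous_apply i)

lemma zdot_surjective {m : ℕ} (v : Fin m → ℤ) (hv : v ≠ 0) : Function.Surjective (zdot v) := by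
  obtain ⟨i, hi⟩ : ∃ i, v i ≠ 0 := by
    by_contra h
    push_neg at h
    exact hv (funext h)
  intro y
  obtain ⟨t, rfl⟩ : ∃ t : ℝ, (t : UnitAddCircle) = y := by
    exact Quotient.exists_rep y
  refine ⟨Function.update (0 : Torus m) i ((t / v i : ℝ) : UnitAddCircle), ?_⟩
  unfold zdot
  rw [Finset.sum_eq_single i]
  · rw [Function.update_self]
    have : (v i : ℤ) • ((t / v i : ℝ) : UnitAddCircle) = (((v i : ℝ) * (t / v i) : ℝ) : UnitAddCircle) := by
      rw [← zsmul_eq_mul]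
      exact (map_zsmul (QuotientAddGroup.mk' (AddSubgroup.zmultiples (1:ℝ))) (v i) (t / v i)).symm
    rw [this, mul_div_cancel₀ t (by exact_mod_cast hi)]
  · intro j _ hj
    rw [Function.update_of_ne hj]
    simp
  · intro h
    exact absurd (Finset.mem_univ i) h

lemma zdot_map_volume {m : ℕ} (v : Fin m → ℤ) (hv : v ≠ 0) :
    Measure.map (zdot v) (volume : Measure (Torus m)) = (volume : Measure UnitAddCircle) := by
  let φ : Torus m →+ UnitAddCircle := AddMonoidHom.mk' (zdot v) (fun x y => zdot_add_right v x y)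
  have hφ : ⇑φ = zdot v := rfl
  have h1 : Measure.IsAddHaarMeasure (Measure.map (zdot v) (volume : Measure (Torus m))) := by
    rw [← hφ]
    exact Measure.isAddHaarMeasure_map_of_isFiniteMeasure volume φ (zdot_continuous v)
      (zdot_surjective v hv)
  have h2 : IsProbabilityMeasure (Measure.map (zdot v) (volume : Measure (Torus m))) :=
    Measure.isProbabilityMeasure_map (zdot_continuous v).measurable.aemeasurable
  exact Measure.isAddHaarMeasure_eq_of_isProbabilityMeasure _ _

lemma circle_singleton_null (c : UnitAddCircle) : (volume : Measure UnitAddCircle) {c} = 0 := by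
  have h := AddCircle.volume_closedBall (T := 1) (x := c) 0
  simpa [Metric.closedBall_zero] using h

lemma zdot_fiber_null {m : ℕ} (v : Fin m → ℤ) (hv : v ≠ 0) (c : UnitAddCircle) :
    (volume : Measure (Torus m)) {x | zdot v x = c} = 0 := by
  have hm : Measurable (zdot v) := (zdot_continuous v).measurable
  have : (volume : Measure (Torus m)) (zdot v ⁻¹' {c})
      = Measure.map (zdot v) (volume : Measure (Torus m)) {c} :=
    (Measure.map_apply hm (measurableSet_singleton c)).symm
  rw [zdot_map_volume v hv, circle_singleton_null] at this
  exact this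

/-- Key consequence of ergodicity: if `w ≠ 0` is fixed by `Sᵗ`, then `w · b` has infinite
order in `𝕋`. -/
lemma ergodic_zdot_ne {m : ℕ} (S : Matrix (Fin m) (Fin m) ℤ) (b : Torus m)
    (hT : Ergodic (fun x : Torus m => matAct S x + b) volume)
    (w : Fin m → ℤ) (hw : w ≠ 0) (hfix : S.transpose.mulVec w = w)
    (n : ℤ) (hn : n ≠ 0) (h0 : n • zdot w b = 0) : False := by
  set u : Fin m → ℤ := n • w with hu_def
  have hu : u ≠ 0 := smul_ne_zero hn hw
  have hinv : (zdot u) ∘ (fun x : Torus m => matAct S x + b) = zdot u := by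
    funext x
    simp only [Function.comp_apply]
    rw [zdot_add_right, zdot_matAct]
    have h1 : S.transpose.mulVec u = u := by
      rw [hu_def, Matrix.mulVec_smul, hfix]
    have h2 : zdot u b = 0 := by
      rw [hu_def, zdot_smul_left, h0]
    rw [h1, h2, add_zero]
  obtain ⟨c, hc⟩ := hT.toPreErgodic.ae_eq_const_of_ae_eq_comp
    (zdot_continuous u).measurable hinv
  have hnull : (volume : Measure (Torus m)) {x | zdot u x = c} = 0 := zdot_fiber_null u hu c
  have hfull : (volume : Measure (Torus m)) {x | ¬ (zdot u x = c)} = 0 := hc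
  have : (volume : Measure (Torus m)) Set.univ = 0 := by
    refine le_antisymm ?_ zero_le
    have hsub : (Set.univ : Set (Torus m)) ⊆ {x | zdot u x = c} ∪ {x | ¬ (zdot u x = c)} := by
      intro x _
      by_cases h : zdot u x = c
      · exact Or.inl h
      · exact Or.inr h
    calc (volume : Measure (Torus m)) Set.univ
        ≤ volume ({x | zdot u x = c} ∪ {x | ¬ (zdot u x = c)}) := measure_mono hsub
      _ ≤ volume {x | zdot u x = c} + volume {x | ¬ (zdot u x = c)} := measure_union_le _ _
      _ = 0 := by rw [hnull, hfull, add_zero]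
  simp [measure_univ] at this

/- ### Main theorem -/

/-- For an ergodic unipotent affine transformation `T x = S x + b` of `𝕋^m` and almost every
`x`, for every non-zero `k ∈ ℤ^m` the non-constant coefficients (in the binomial basis, up to
the degree `m₀ = min{q : (Sᵗ−1)^q k = 0}` of the polynomial `n ↦ k·Tⁿx`) are rationally
independent elements of `𝕋`. -/
theorem stmt7 {m : ℕ} (S : Matrix (Fin m) (Fin m) ℤ) (hS : (S - 1) ^ m = 0) (b : Torus m)
    (hT : Ergodic (fun x : Torus m => matAct S x + b) volume) :
    ∀ᵐ x : Torus m ∂volume, ∀ k : Fin m → ℤ, k ≠ 0 →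
      ∀ r : ℕ → ℤ,
        (∑ j ∈ Finset.Icc 1 (sInf {q : ℕ | ((S.transpose - 1) ^ q).mulVec k = 0}),
            r j • coefC S b k x j) = 0 →
        ∀ j ∈ Finset.Icc 1 (sInf {q : ℕ | ((S.transpose - 1) ^ q).mulVec k = 0}), r j = 0 := by
  classical
  -- basic nilpotency
  have hA : (S.transpose - 1) ^ m = 0 := by
    have h1 : S.transpose - 1 = (S - 1).transpose := by
      rw [Matrix.transpose_sub, Matrix.transpose_one]
    rw [h1, ← Matrix.transpose_pow, hS, Matrix.transpose_zero]
  set m₀ : (Fin m → ℤ) → ℕ :=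
    fun k => sInf {q : ℕ | ((S.transpose - 1) ^ q).mulVec k = 0} with hm₀_def
  -- countable parametrisation of the exceptional null sets
  set rr : (Fin (m + 1) → ℤ) → ℕ → ℤ :=
    fun ρ j => if h : j < m + 1 then ρ ⟨j, h⟩ else 0 with hrr_def
  set Vf : (Fin m → ℤ) × (Fin (m + 1) → ℤ) → (Fin m → ℤ) :=
    fun p => ∑ j ∈ Finset.Icc 1 (m₀ p.1), rr p.2 j • ((S.transpose - 1) ^ j).mulVec p.1
    with hVf_def
  set Cf : (Fin m → ℤ) × (Fin (m + 1) → ℤ) → UnitAddCircle :=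
    fun p => ∑ j ∈ Finset.Icc 1 (m₀ p.1),
      rr p.2 j • zdot (((S.transpose - 1) ^ (j - 1)).mulVec p.1) b with hCf_def
  have hae : ∀ᵐ x : Torus m ∂volume, ∀ p : (Fin m → ℤ) × (Fin (m + 1) → ℤ),
      Vf p ≠ 0 → zdot (Vf p) x ≠ - Cf p := by
    rw [MeasureTheory.ae_all_iff]
    intro p
    by_cases hV : Vf p = 0
    · filter_upwards with x h
      exact absurd hV h
    · have := zdot_fiber_null (Vf p) hV (- Cf p)
      rw [MeasureTheory.ae_iff]
      refine measure_mono_null ?_ this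
      intro x hx
      by_contra h
      exact hx fun _ => h
  filter_upwards [hae] with x hx k hk r hsum j hjmem
  -- facts about m₀ k
  have hQm : ((S.transpose - 1) ^ m).mulVec k = 0 := by rw [hA, Matrix.zero_mulVec]
  have hm₀le : m₀ k ≤ m := Nat.sInf_le hQm
  have hm₀mem : ((S.transpose - 1) ^ (m₀ k)).mulVec k = 0 := by
    have h : m₀ k ∈ {q : ℕ | ((S.transpose - 1) ^ q).mulVec k = 0} := by
      rw [hm₀_def]
      exact Nat.sInf_mem ⟨m, hQm⟩
    exact h
  have hm₀pos : 1 ≤ m₀ k := by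
    rcases Nat.eq_zero_or_pos (m₀ k) with h | h
    · rw [h, pow_zero, Matrix.one_mulVec] at hm₀mem
      exact absurd hm₀mem hk
    · exact h
  have hmin : ∀ q, q < m₀ k → ((S.transpose - 1) ^ q).mulVec k ≠ 0 := by
    intro q hq hzero
    exact absurd (Nat.sInf_le hzero) (Nat.not_le.mpr hq)
  have hbig : ∀ q, m₀ k ≤ q → ((S.transpose - 1) ^ q).mulVec k = 0 := by
    intro q hq
    rw [show q = (q - m₀ k) + m₀ k from (Nat.sub_add_cancel hq).symm, pow_add,
      ← Matrix.mulVec_mulVec, hm₀mem, Matrix.mulVec_zero]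
  -- abbreviations
  set V : Fin m → ℤ :=
    ∑ l ∈ Finset.Icc 1 (m₀ k), r l • ((S.transpose - 1) ^ l).mulVec k with hV_def
  set C : UnitAddCircle :=
    ∑ l ∈ Finset.Icc 1 (m₀ k), r l • zdot (((S.transpose - 1) ^ (l - 1)).mulVec k) b
    with hC_def
  -- rewrite the hypothesis sum
  have hsum' : zdot V x + C = 0 := by
    rw [hV_def, zdot_sum_left]
    have : ∀ l ∈ Finset.Icc 1 (m₀ k),
        zdot (r l • ((S.transpose - 1) ^ l).mulVec k) x
          = r l • zdot (((S.transpose - 1) ^ l).mulVec k) x :=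
      fun l _ => zdot_smul_left _ _ _
    rw [Finset.sum_congr rfl this, hC_def, ← Finset.sum_add_distrib]
    rw [← hsum]
    refine Finset.sum_congr rfl fun l _ => ?_
    rw [coefC, smul_add]
  have h1 : zdot V x = - C := eq_neg_of_add_eq_zero_left hsum'
  -- Step 1 : V = 0
  have hV0 : V = 0 := by
    by_contra hV
    set ρ : Fin (m + 1) → ℤ := fun i => r i.val with hρ_def
    have hre : ∀ l ∈ Finset.Icc 1 (m₀ k), rr ρ l = r l := by
      intro l hl
      have hl' : l < m + 1 :=
        Nat.lt_succ_of_le (le_trans (Finset.mem_Icc.mp hl).2 hm₀le)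
      simp [hrr_def, hρ_def, hl', Nat.lt_succ_iff.mp hl']
    have hVeq : Vf (k, ρ) = V := by
      rw [hVf_def, hV_def]
      exact Finset.sum_congr rfl fun l hl => by rw [hre l hl]
    have hCeq : Cf (k, ρ) = C := by
      rw [hCf_def, hC_def]
      exact Finset.sum_congr rfl fun l hl => by rw [hre l hl]
    exact hx (k, ρ) (by rw [hVeq]; exact hV) (by rw [hVeq, hCeq]; exact h1)
  -- Step 2 : the coefficients below m₀ vanish
  have claim : ∀ l, 1 ≤ l → l < m₀ k → r l = 0 := by
    intro l
    induction l using Nat.strong_induction_on with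
    | _ l ih =>
      intro hl1 hl2
      have h3 : ((S.transpose - 1) ^ (m₀ k - 1 - l)).mulVec V = 0 := by
        rw [hV0, Matrix.mulVec_zero]
      have h4 : ((S.transpose - 1) ^ (m₀ k - 1 - l)).mulVec V
          = ∑ q ∈ Finset.Icc 1 (m₀ k),
              r q • ((S.transpose - 1) ^ (m₀ k - 1 - l + q)).mulVec k := by
        rw [hV_def, ← Matrix.mulVecLin_apply, map_sum]
        refine Finset.sum_congr rfl fun q _ => ?_
        rw [LinearMap.map_smul, Matrix.mulVecLin_apply, Matrix.mulVec_mulVec, ← pow_add]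
      have h5 : (∑ q ∈ Finset.Icc 1 (m₀ k),
            r q • ((S.transpose - 1) ^ (m₀ k - 1 - l + q)).mulVec k)
          = r l • ((S.transpose - 1) ^ (m₀ k - 1)).mulVec k := by
        rw [Finset.sum_eq_single_of_mem l
          (Finset.mem_Icc.mpr ⟨hl1, le_of_lt hl2⟩)]
        · rw [show m₀ k - 1 - l + l = m₀ k - 1 from by omega]
        · intro q hq hne
          rcases lt_or_gt_of_ne hne with hlt | hgt
          · rw [ih q hlt (Finset.mem_Icc.mp hq).1 (lt_trans hlt hl2), zero_smul]
          · rw [hbig (m₀ k - 1 - l + q) (by omega), smul_zero]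
      have h6 : r l • ((S.transpose - 1) ^ (m₀ k - 1)).mulVec k = 0 := by
        rw [← h5, ← h4, h3]
      rcases smul_eq_zero.mp h6 with h | h
      · exact h
      · exact absurd h (hmin (m₀ k - 1) (by omega))
  -- Step 3 : the top coefficient vanishes (via ergodicity)
  have htop : r (m₀ k) = 0 := by
    have h2 : r (m₀ k) • coefC S b k x (m₀ k) = 0 := by
      rw [← hsum, Finset.sum_eq_single_of_mem (m₀ k)
        (Finset.mem_Icc.mpr ⟨hm₀pos, le_refl _⟩)]
      intro q hq hne
      have hq2 := Finset.mem_Icc.mp hq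
      rw [claim q hq2.1 (lt_of_le_of_ne hq2.2 hne), zero_smul]
    have h3 : coefC S b k x (m₀ k)
        = zdot (((S.transpose - 1) ^ (m₀ k - 1)).mulVec k) b := by
      rw [coefC, hm₀mem, zdot_zero_left, zero_add]
    rw [h3] at h2
    by_contra hne
    refine ergodic_zdot_ne S b hT (((S.transpose - 1) ^ (m₀ k - 1)).mulVec k)
      (hmin (m₀ k - 1) (by omega)) ?_ (r (m₀ k)) hne h2
    -- Sᵗ fixes w
    have h4 : (S.transpose - 1).mulVec (((S.transpose - 1) ^ (m₀ k - 1)).mulVec k) = 0 := by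
      rw [Matrix.mulVec_mulVec, ← pow_succ']
      rw [show m₀ k - 1 + 1 = m₀ k from Nat.succ_pred_eq_of_pos hm₀pos]
      exact hm₀mem
    rw [Matrix.sub_mulVec, Matrix.one_mulVec, sub_eq_zero] at h4
    exact h4
  -- conclusion
  have hj := Finset.mem_Icc.mp hjmem
  rcases lt_or_eq_of_le hj.2 with h | h
  · exact claim j hj.1 h
  · rw [h]; exact htop
end

section
/- For any probability space (X, 𝒳, μ), any measurable set A, and any two sub-σ-algebras 𝒜, ℬ of 𝒳, we have ∫ 𝟙_A · E(𝟙_A | 𝒜) · E(𝟙_A | ℬ) dμ ≥ μ(A)³. -/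
open MeasureTheory
open scoped ENNReal

section ChuAux

variable {X : Type*} {m₁ m₂ : MeasurableSpace X} {m : MeasurableSpace X} {μ : Measure X}
  [IsProbabilityMeasure μ] {A : Set X}

private lemma chu_int_f (hA : MeasurableSet A) :
    Integrable (A.indicator (fun _ => (1 : ℝ))) μ :=
  (integrable_const 1).indicator hA

private lemma chu_f_nonneg : ∀ x, 0 ≤ A.indicator (fun _ => (1 : ℝ)) x :=
  fun x => Set.indicator_nonneg (fun _ _ => zero_le_one) x

private lemma chu_g_nonneg :
    0 ≤ᵐ[μ] μ[A.indicator (fun _ => (1 : ℝ)) | m₁] :=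
  condExp_nonneg (Filter.Eventually.of_forall chu_f_nonneg)

private lemma chu_g_le_one (hA : MeasurableSet A) (h₁ : m₁ ≤ m) :
    μ[A.indicator (fun _ => (1 : ℝ)) | m₁] ≤ᵐ[μ] fun _ => 1 := by
  have h := condExp_mono (μ := μ) (m := m₁) (chu_int_f hA) (integrable_const (1 : ℝ))
    (Filter.Eventually.of_forall fun x => by
      classical
      by_cases hx : x ∈ A <;> simp [Set.indicator_apply, hx])
  have hc : μ[(fun _ => (1 : ℝ)) | m₁] = fun _ => (1 : ℝ) := condExp_const h₁ 1
  filter_upwards [h] with x hx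
  simpa [hc] using hx

/-- a.e. on `A`, the conditional expectation of `𝟙_A` is positive. -/
private lemma chu_g_pos (hA : MeasurableSet A) (h₁ : m₁ ≤ m) :
    ∀ᵐ x ∂μ, x ∈ A → 0 < (μ[A.indicator (fun _ => (1 : ℝ)) | m₁]) x := by
  set f := A.indicator (fun _ => (1 : ℝ)) with hf_def
  set g := μ[f | m₁] with hg_def
  have hgm₁ : Measurable[m₁] g := stronglyMeasurable_condExp.measurable
  set s : Set X := {x | g x ≤ 0} with hs_def
  have hs₁ : MeasurableSet[m₁] s := hgm₁ measurableSet_Iic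
  have hs : MeasurableSet s := h₁ _ hs₁
  have heq : ∫ x in s, g x ∂μ = ∫ x in s, f x ∂μ := setIntegral_condExp h₁ (chu_int_f hA) hs₁
  have hle : ∫ x in s, g x ∂μ ≤ 0 :=
    setIntegral_nonpos hs (fun x hx => hx)
  have hf_eq : ∫ x in s, f x ∂μ = (μ (s ∩ A)).toReal := by
    rw [hf_def, setIntegral_indicator hA]
    simp
    rfl
  have h0 : μ (s ∩ A) = 0 := by
    have h1 : (μ (s ∩ A)).toReal ≤ 0 := by rw [← hf_eq, ← heq]; exact hle
    have h2 : (μ (s ∩ A)).toReal = 0 := le_antisymm h1 ENNReal.toReal_nonneg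
    exact (ENNReal.toReal_eq_zero_iff _).mp h2 |>.resolve_right (measure_ne_top μ _)
  have := measure_eq_zero_iff_ae_notMem.mp h0
  filter_upwards [this] with x hx hxA
  by_contra hcon
  push_neg at hcon
  exact hx ⟨hcon, hxA⟩

/-- Key: `∫ 𝟙_A / E(𝟙_A | m₁) dμ ≤ 1`. -/
private lemma chu_key (hA : MeasurableSet A) (h₁ : m₁ ≤ m) :
    ∫⁻ x, ENNReal.ofReal (A.indicator (fun _ => (1 : ℝ)) x)
      * (ENNReal.ofReal ((μ[A.indicator (fun _ => (1 : ℝ)) | m₁]) x))⁻¹ ∂μ ≤ 1 := by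
  classical
  set f := A.indicator (fun _ => (1 : ℝ)) with hf_def
  set g := μ[f | m₁] with hg_def
  have hgm₁ : Measurable[m₁] g := stronglyMeasurable_condExp.measurable
  have hgm : Measurable g := hgm₁.mono h₁ le_rfl
  have hfm : Measurable f := measurable_const.indicator hA
  set φ : ℕ → X → ℝ :=
    fun n => Set.indicator {x | ((n : ℝ) + 1)⁻¹ ≤ g x} (fun x => (g x)⁻¹) with hφ_def
  have hφm₁ : ∀ n, Measurable[m₁] (φ n) := fun n =>
    Measurable.indicator hgm₁.inv (measurableSet_le measurable_const hgm₁)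
  have hφ_nonneg : ∀ n x, 0 ≤ φ n x := by
    intro n x
    by_cases hx : ((n : ℝ) + 1)⁻¹ ≤ g x
    · have hgx : 0 < g x := lt_of_lt_of_le (by positivity) hx
      simp [hφ_def, Set.indicator_of_mem, hx, inv_nonneg.mpr hgx.le]
    · simp [hφ_def, Set.indicator_of_notMem, hx]
  have hφ_le : ∀ n x, φ n x ≤ (g x)⁻¹ ∨ φ n x = 0 := by
    intro n x
    by_cases hx : ((n : ℝ) + 1)⁻¹ ≤ g x
    · left; simp [hφ_def, Set.indicator_of_mem, hx]
    · right; simp [hφ_def, Set.indicator_of_notMem, hx]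
  have hφbd : ∀ n x, ‖φ n x‖ ≤ (n : ℝ) + 1 := by
    intro n x
    rw [Real.norm_eq_abs, abs_of_nonneg (hφ_nonneg n x)]
    by_cases hx : ((n : ℝ) + 1)⁻¹ ≤ g x
    · have hgx : 0 < g x := lt_of_lt_of_le (by positivity) hx
      have : (g x)⁻¹ ≤ ((n : ℝ) + 1) := by
        rw [inv_le_comm₀ hgx (by positivity)]
        exact hx
      simpa [hφ_def, Set.indicator_of_mem, hx] using this
    · simp [hφ_def, Set.indicator_of_notMem, hx]
      positivity
  have hint_n : ∀ n, Integrable (fun x => φ n x * f x) μ := fun n =>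
    (chu_int_f hA).bdd_mul
      (((hφm₁ n).mono h₁ le_rfl).stronglyMeasurable.aestronglyMeasurable)
      (Filter.Eventually.of_forall (hφbd n))
  have hpull : ∀ n, μ[(φ n) * f | m₁] =ᵐ[μ] (φ n) * g := fun n =>
    condExp_stronglyMeasurable_mul_of_bound h₁ ((hφm₁ n).stronglyMeasurable)
      (chu_int_f hA) _ (Filter.Eventually.of_forall (hφbd n))
  have hInt_le : ∀ n, ∫ x, φ n x * f x ∂μ ≤ 1 := by
    intro n
    have hint_φg : Integrable (fun x => φ n x * g x) μ :=
      integrable_condExp.bdd_mul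
        (((hφm₁ n).mono h₁ le_rfl).stronglyMeasurable.aestronglyMeasurable)
        (Filter.Eventually.of_forall (hφbd n))
    have h1 : ∫ x, φ n x * f x ∂μ = ∫ x, φ n x * g x ∂μ := by
      calc ∫ x, φ n x * f x ∂μ = ∫ x, ((φ n) * f) x ∂μ := rfl
        _ = ∫ x, (μ[(φ n) * f | m₁]) x ∂μ := (integral_condExp h₁).symm
        _ = ∫ x, ((φ n) * g) x ∂μ := integral_congr_ae (hpull n)
        _ = ∫ x, φ n x * g x ∂μ := rfl
    rw [h1]
    have hle1 : ∀ x, φ n x * g x ≤ 1 := by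
      intro x
      by_cases hx : ((n : ℝ) + 1)⁻¹ ≤ g x
      · have hgx : 0 < g x := lt_of_lt_of_le (by positivity) hx
        simp [hφ_def, Set.indicator_of_mem, hx, inv_mul_cancel₀ hgx.ne']
      · simp [hφ_def, Set.indicator_of_notMem, hx]
    calc ∫ x, φ n x * g x ∂μ ≤ ∫ _, (1 : ℝ) ∂μ :=
          integral_mono hint_φg (integrable_const 1) hle1
      _ = 1 := by simp
  have hlin : ∀ n, ∫⁻ x, ENNReal.ofReal (φ n x * f x) ∂μ ≤ 1 := by
    intro n
    rw [← ofReal_integral_eq_lintegral_ofReal (hint_n n)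
      (Filter.Eventually.of_forall fun x => mul_nonneg (hφ_nonneg n x) (chu_f_nonneg x))]
    exact ENNReal.ofReal_le_one.mpr (hInt_le n)
  -- monotone convergence
  have hmono : ∀ x, Monotone fun n => ENNReal.ofReal (φ n x * f x) := by
    intro x
    apply monotone_nat_of_le_succ
    intro n
    apply ENNReal.ofReal_le_ofReal
    apply mul_le_mul_of_nonneg_right _ (chu_f_nonneg x)
    by_cases hx : ((n : ℝ) + 1)⁻¹ ≤ g x
    · have hx' : ((n : ℝ) + 1 + 1)⁻¹ ≤ g x := by
        refine le_trans (inv_anti₀ (by positivity) (by linarith)) hx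
      simp [hφ_def, Set.indicator_of_mem, hx, hx', le_refl]
    · simpa [hφ_def, Set.indicator_of_notMem, hx] using hφ_nonneg (n + 1) x
  have hmeas_n : ∀ n, AEMeasurable (fun x => ENNReal.ofReal (φ n x * f x)) μ := fun n =>
    ((((hφm₁ n).mono h₁ le_rfl).mul hfm).ennreal_ofReal).aemeasurable
  have hsup := lintegral_iSup' hmeas_n (Filter.Eventually.of_forall hmono)
  have hcongr :
      (fun x => ENNReal.ofReal (f x) * (ENNReal.ofReal (g x))⁻¹)
        =ᵐ[μ] fun x => ⨆ n, ENNReal.ofReal (φ n x * f x) := by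
    filter_upwards [chu_g_pos hA h₁] with x hx
    by_cases hxA : x ∈ A
    · have hgx : 0 < g x := hx hxA
      have hfx : f x = 1 := by simp [hf_def, Set.indicator_of_mem hxA]
      have hterm : ∀ n, ENNReal.ofReal (φ n x) ≤ (ENNReal.ofReal (g x))⁻¹ := by
        intro n
        rw [← ENNReal.ofReal_inv_of_pos hgx]
        apply ENNReal.ofReal_le_ofReal
        rcases hφ_le n x with h | h
        · exact h
        · rw [h]; positivity
      obtain ⟨k, hk⟩ := exists_nat_gt (g x)⁻¹
      have hkx : ((k : ℝ) + 1)⁻¹ ≤ g x := by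
        rw [inv_le_comm₀ (by positivity) hgx]
        exact le_trans hk.le (by linarith)
      have hwit : ENNReal.ofReal (φ k x) = (ENNReal.ofReal (g x))⁻¹ := by
        rw [← ENNReal.ofReal_inv_of_pos hgx]
        congr 1
        simp [hφ_def, Set.indicator_of_mem, hkx]
      rw [hfx]
      simp only [ENNReal.ofReal_one, one_mul, mul_one]
      refine le_antisymm ?_ ?_
      · exact hwit ▸ le_iSup_of_le k le_rfl
      · exact iSup_le hterm
    · have hfx : f x = 0 := by simp [hf_def, Set.indicator_of_notMem hxA]
      simp [hfx]
  calc ∫⁻ x, ENNReal.ofReal (f x) * (ENNReal.ofReal (g x))⁻¹ ∂μ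
      = ∫⁻ x, ⨆ n, ENNReal.ofReal (φ n x * f x) ∂μ := lintegral_congr_ae hcongr
    _ = ⨆ n, ∫⁻ x, ENNReal.ofReal (φ n x * f x) ∂μ := hsup
    _ ≤ 1 := iSup_le hlin

/-- Cauchy–Schwarz for `ℝ≥0∞`-valued lintegrals. -/
private lemma chu_cs {u v : X → ℝ≥0∞} (hu : AEMeasurable u μ) (hv : AEMeasurable v μ) :
    (∫⁻ x, u x * v x ∂μ) ^ 2 ≤ (∫⁻ x, u x ^ 2 ∂μ) * (∫⁻ x, v x ^ 2 ∂μ) := by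
  have hpq : (2 : ℝ).HolderConjugate 2 := by constructor <;> norm_num
  have h := ENNReal.lintegral_mul_le_Lp_mul_Lq μ hpq hu hv
  simp only [Pi.mul_apply] at h
  have h2 : ∀ w : X → ℝ≥0∞, (∫⁻ x, w x ^ (2 : ℝ) ∂μ) = ∫⁻ x, w x ^ 2 ∂μ := fun w =>
    lintegral_congr fun x => by
      rw [← ENNReal.rpow_natCast (w x) 2]; norm_num
  have hsq : (∫⁻ x, u x * v x ∂μ) ^ 2
      ≤ ((∫⁻ x, u x ^ (2 : ℝ) ∂μ) ^ (1 / (2 : ℝ)) * (∫⁻ x, v x ^ (2 : ℝ) ∂μ) ^ (1 / (2 : ℝ))) ^ 2 := by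
    gcongr
  refine hsq.trans_eq ?_
  rw [mul_pow, ← ENNReal.rpow_natCast ((∫⁻ x, u x ^ (2 : ℝ) ∂μ) ^ (1 / (2 : ℝ))) 2,
    ← ENNReal.rpow_natCast ((∫⁻ x, v x ^ (2 : ℝ) ∂μ) ^ (1 / (2 : ℝ))) 2,
    ← ENNReal.rpow_mul, ← ENNReal.rpow_mul]
  norm_num [h2]


private lemma chu_main (hA : MeasurableSet A) (h₁ : m₁ ≤ m) (h₂ : m₂ ≤ m) :
    (μ A).toReal ^ 3 ≤
      ∫ x, A.indicator (fun _ => (1 : ℝ)) x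
        * (μ[A.indicator (fun _ => (1 : ℝ)) | m₁]) x
        * (μ[A.indicator (fun _ => (1 : ℝ)) | m₂]) x ∂μ := by
  classical
  set f := A.indicator (fun _ => (1 : ℝ)) with hf_def
  set g := μ[f | m₁] with hg_def
  set h := μ[f | m₂] with hh_def
  have hfm : Measurable f := measurable_const.indicator hA
  have hgm : Measurable g := stronglyMeasurable_condExp.measurable.mono h₁ le_rfl
  have hhm : Measurable h := stronglyMeasurable_condExp.measurable.mono h₂ le_rfl
  set F : X → ℝ≥0∞ := fun x => ENNReal.ofReal (f x) with hF_def
  set G : X → ℝ≥0∞ := fun x => ENNReal.ofReal (g x) with hG_def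
  set H : X → ℝ≥0∞ := fun x => ENNReal.ofReal (h x) with hH_def
  have hFm : Measurable F := hfm.ennreal_ofReal
  have hGm : Measurable G := hgm.ennreal_ofReal
  have hHm : Measurable H := hhm.ennreal_ofReal
  have hF_val : ∀ x, F x = 0 ∨ F x = 1 := by
    intro x
    by_cases hx : x ∈ A
    · right; simp [hF_def, hf_def, Set.indicator_of_mem hx]
    · left; simp [hF_def, hf_def, Set.indicator_of_notMem hx]
  have hF_sq : ∀ x, F x * F x = F x := by
    intro x; rcases hF_val x with h' | h' <;> simp [h']
  have hF_le : ∀ x, F x ≤ 1 := by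
    intro x; rcases hF_val x with h' | h' <;> simp [h']
  have hF_rpow : ∀ (r : ℝ), 0 < r → ∀ x, F x ^ r = F x := by
    intro r hr x
    rcases hF_val x with h' | h' <;>
      simp [h', ENNReal.zero_rpow_of_pos hr, ENNReal.one_rpow]
  have hG_ne_top : ∀ x, G x ≠ ∞ := fun x => ENNReal.ofReal_ne_top
  have hH_ne_top : ∀ x, H x ≠ ∞ := fun x => ENNReal.ofReal_ne_top
  -- positivity on A
  have hG_pos : ∀ᵐ x ∂μ, x ∈ A → 0 < G x := by
    filter_upwards [chu_g_pos hA h₁] with x hx hxA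
    simpa [hG_def] using ENNReal.ofReal_pos.mpr (hx hxA)
  have hH_pos : ∀ᵐ x ∂μ, x ∈ A → 0 < H x := by
    filter_upwards [chu_g_pos hA h₂] with x hx hxA
    simpa [hH_def] using ENNReal.ofReal_pos.mpr (hx hxA)
  set a : ℝ≥0∞ := μ A with ha_def
  have hFa : ∫⁻ x, F x ∂μ = a := by
    have : F = A.indicator (1 : X → ℝ≥0∞) := by
      funext x
      by_cases hx : x ∈ A <;>
        simp [hF_def, hf_def, Set.indicator_of_mem, Set.indicator_of_notMem, hx]
    rw [this, lintegral_indicator_one hA]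
  set I : ℝ≥0∞ := ∫⁻ x, F x * G x * H x ∂μ with hI_def
  set J : ℝ≥0∞ := ∫⁻ x, F x * (G x * H x) ^ (1 / 2 : ℝ) ∂μ with hJ_def
  set K : ℝ≥0∞ := ∫⁻ x, F x * (G x * H x) ^ (-(1 / 2) : ℝ) ∂μ with hK_def
  -- Step 1: J^2 ≤ I * a
  have hstep1 : J ^ 2 ≤ I * a := by
    have hu : AEMeasurable (fun x => (F x * G x * H x) ^ (1 / 2 : ℝ)) μ :=
      (((hFm.mul hGm).mul hHm).pow_const _).aemeasurable
    have hcs := chu_cs (μ := μ) hu hFm.aemeasurable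
    have e1 : ∫⁻ x, (F x * G x * H x) ^ (1 / 2 : ℝ) * F x ∂μ = J := by
      refine lintegral_congr fun x => ?_
      rw [mul_assoc, ENNReal.mul_rpow_of_nonneg _ _ (by norm_num : (0:ℝ) ≤ 1/2),
        hF_rpow _ (by norm_num), mul_comm (F x * (G x * H x) ^ ((1:ℝ)/2)) (F x),
        ← mul_assoc, hF_sq]
    have e2 : ∫⁻ x, ((F x * G x * H x) ^ (1 / 2 : ℝ)) ^ 2 ∂μ = I := by
      refine lintegral_congr fun x => ?_
      rw [← ENNReal.rpow_natCast ((F x * G x * H x) ^ (1 / 2 : ℝ)) 2, ← ENNReal.rpow_mul]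
      norm_num
    have e3 : ∫⁻ x, F x ^ 2 ∂μ = a := by
      rw [← hFa]; refine lintegral_congr fun x => ?_; rw [pow_two, hF_sq]
    rw [e1, e2, e3] at hcs
    exact hcs
  -- Step 2: a^2 ≤ J * K
  have hstep2 : a ^ 2 ≤ J * K := by
    set u : X → ℝ≥0∞ := fun x => (F x * (G x * H x) ^ (1 / 2 : ℝ)) ^ (1 / 2 : ℝ) with hu_def
    set v : X → ℝ≥0∞ := fun x => (F x * (G x * H x) ^ (-(1 / 2) : ℝ)) ^ (1 / 2 : ℝ) with hv_def
    have hum : Measurable u := ((hFm.mul ((hGm.mul hHm).pow_const _)).pow_const _)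
    have hvm : Measurable v := ((hFm.mul ((hGm.mul hHm).pow_const _)).pow_const _)
    have hcs := chu_cs (μ := μ) hum.aemeasurable hvm.aemeasurable
    have e1 : ∫⁻ x, u x * v x ∂μ = a := by
      rw [← hFa]
      refine lintegral_congr_ae ?_
      filter_upwards [hG_pos, hH_pos] with x hGx hHx
      rw [hu_def, hv_def]
      by_cases hxA : x ∈ A
      · have hFx : F x = 1 := (hF_val x).resolve_left (by
          simp [hF_def, hf_def, Set.indicator_of_mem hxA])
        have hGH0 : G x * H x ≠ 0 := by
          exact mul_ne_zero (hGx hxA).ne' (hHx hxA).ne'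
        have hGHtop : G x * H x ≠ ∞ := ENNReal.mul_ne_top (hG_ne_top x) (hH_ne_top x)
        simp only [hFx, one_mul]
        rw [← ENNReal.mul_rpow_of_nonneg _ _ (by norm_num : (0:ℝ) ≤ 1/2),
          ← ENNReal.rpow_add _ _ hGH0 hGHtop]
        norm_num
      · have hFx : F x = 0 := by simp [hF_def, hf_def, Set.indicator_of_notMem hxA]
        simp [hFx, ENNReal.zero_rpow_of_pos (by norm_num : (0:ℝ) < 1/2)]
    have e2 : ∫⁻ x, u x ^ 2 ∂μ = J := by
      refine lintegral_congr fun x => ?_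
      rw [hu_def, ← ENNReal.rpow_natCast (_ ^ (1/2 : ℝ)) 2, ← ENNReal.rpow_mul]
      norm_num
    have e3 : ∫⁻ x, v x ^ 2 ∂μ = K := by
      refine lintegral_congr fun x => ?_
      rw [hv_def, ← ENNReal.rpow_natCast (_ ^ (1/2 : ℝ)) 2, ← ENNReal.rpow_mul]
      norm_num
    rw [e1, e2, e3] at hcs
    exact hcs
  -- Step 3: K ≤ 1
  have hstep3 : K ≤ 1 := by
    set u : X → ℝ≥0∞ := fun x => (F x * (G x)⁻¹) ^ (1 / 2 : ℝ) with hu_def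
    set v : X → ℝ≥0∞ := fun x => (F x * (H x)⁻¹) ^ (1 / 2 : ℝ) with hv_def
    have hum : Measurable u := ((hFm.mul hGm.inv).pow_const _)
    have hvm : Measurable v := ((hFm.mul hHm.inv).pow_const _)
    have hcs := chu_cs (μ := μ) hum.aemeasurable hvm.aemeasurable
    have e1 : ∫⁻ x, u x * v x ∂μ = K := by
      refine lintegral_congr fun x => ?_
      rw [hu_def, hv_def, ← ENNReal.mul_rpow_of_nonneg _ _ (by norm_num : (0:ℝ) ≤ 1/2)]
      have : F x * (G x)⁻¹ * (F x * (H x)⁻¹) = F x * (G x * H x)⁻¹ := by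
        rw [ENNReal.mul_inv (Or.inr (hH_ne_top x)) (Or.inl (hG_ne_top x))]
        rw [show F x * (G x)⁻¹ * (F x * (H x)⁻¹) = F x * F x * ((G x)⁻¹ * (H x)⁻¹) by ring,
          hF_sq]
      rw [this, ENNReal.mul_rpow_of_nonneg _ _ (by norm_num : (0:ℝ) ≤ 1/2),
        hF_rpow _ (by norm_num), ← ENNReal.rpow_neg_one (G x * H x), ← ENNReal.rpow_mul]
      norm_num
    have e2 : ∫⁻ x, u x ^ 2 ∂μ = ∫⁻ x, F x * (G x)⁻¹ ∂μ := by
      refine lintegral_congr fun x => ?_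
      rw [hu_def, ← ENNReal.rpow_natCast (_ ^ (1/2 : ℝ)) 2, ← ENNReal.rpow_mul]
      norm_num
    have e3 : ∫⁻ x, v x ^ 2 ∂μ = ∫⁻ x, F x * (H x)⁻¹ ∂μ := by
      refine lintegral_congr fun x => ?_
      rw [hv_def, ← ENNReal.rpow_natCast (_ ^ (1/2 : ℝ)) 2, ← ENNReal.rpow_mul]
      norm_num
    rw [e1, e2, e3] at hcs
    have hK2 : K ^ 2 ≤ 1 :=
      hcs.trans (by
        calc (∫⁻ x, F x * (G x)⁻¹ ∂μ) * ∫⁻ x, F x * (H x)⁻¹ ∂μ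
            ≤ 1 * 1 := mul_le_mul' (chu_key hA h₁) (chu_key hA h₂)
          _ = 1 := by norm_num)
    by_contra hc
    push_neg at hc
    have : (1 : ℝ≥0∞) < K ^ 2 := by
      calc (1 : ℝ≥0∞) < K := hc
        _ = K * 1 := (mul_one K).symm
        _ ≤ K * K := mul_le_mul_right hc.le K
        _ = K ^ 2 := (pow_two K).symm
    exact absurd hK2 (not_le.mpr this)
  -- combine: a^3 ≤ I
  have hfinal : a ^ 3 ≤ I := by
    by_cases ha0 : a = 0
    · simp [ha0]
    · have ha_top : a ≠ ∞ := measure_ne_top μ A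
      have hJ' : a ^ 2 ≤ J := by
        calc a ^ 2 ≤ J * K := hstep2
          _ ≤ J * 1 := mul_le_mul_right hstep3 J
          _ = J := mul_one J
      have h4 : a ^ 4 ≤ I * a := by
        calc a ^ 4 = (a ^ 2) ^ 2 := by ring
          _ ≤ J ^ 2 := by gcongr
          _ ≤ I * a := hstep1
      have h4' : a ^ 3 * a ≤ I * a := by
        calc a ^ 3 * a = a ^ 4 := by ring
          _ ≤ I * a := h4
      exact (ENNReal.mul_le_mul_iff_left ha0 ha_top).mp h4'
  -- conversion to Bochner integral
  have hg_nonneg : 0 ≤ᵐ[μ] g := chu_g_nonneg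
  have hh_nonneg : 0 ≤ᵐ[μ] h := chu_g_nonneg
  have hg_le_one : g ≤ᵐ[μ] fun _ => 1 := chu_g_le_one hA h₁
  have hh_le_one : h ≤ᵐ[μ] fun _ => 1 := chu_g_le_one hA h₂
  have hI_le_one : I ≤ 1 := by
    have : ∀ᵐ x ∂μ, F x * G x * H x ≤ 1 := by
      filter_upwards [hg_le_one, hh_le_one] with x hgx hhx
      have hG1 : G x ≤ 1 := by
        rw [hG_def]; exact ENNReal.ofReal_le_one.mpr hgx
      have hH1 : H x ≤ 1 := by
        rw [hH_def]; exact ENNReal.ofReal_le_one.mpr hhx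
      calc F x * G x * H x ≤ 1 * 1 * 1 := by
            exact mul_le_mul' (mul_le_mul' (hF_le x) hG1) hH1
        _ = 1 := by norm_num
    calc I ≤ ∫⁻ _, (1 : ℝ≥0∞) ∂μ := lintegral_mono_ae this
      _ = 1 := by simp
  have hI_ne_top : I ≠ ∞ := (hI_le_one.trans_lt ENNReal.one_lt_top).ne
  have hprod_nonneg : 0 ≤ᵐ[μ] fun x => f x * g x * h x := by
    filter_upwards [hg_nonneg, hh_nonneg] with x hgx hhx
    exact mul_nonneg (mul_nonneg (chu_f_nonneg x) hgx) hhx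
  have hprod_meas : AEStronglyMeasurable (fun x => f x * g x * h x) μ :=
    ((hfm.mul hgm).mul hhm).aestronglyMeasurable
  have hconv : ∫ x, f x * g x * h x ∂μ
      = (∫⁻ x, ENNReal.ofReal (f x * g x * h x) ∂μ).toReal :=
    integral_eq_lintegral_of_nonneg_ae hprod_nonneg hprod_meas
  have hlin_eq : ∫⁻ x, ENNReal.ofReal (f x * g x * h x) ∂μ = I := by
    refine lintegral_congr_ae ?_
    filter_upwards [hg_nonneg, hh_nonneg] with x hgx hhx
    rw [ENNReal.ofReal_mul (mul_nonneg (chu_f_nonneg x) hgx),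
      ENNReal.ofReal_mul (chu_f_nonneg x)]
  rw [hconv, hlin_eq, ← ENNReal.toReal_pow]
  exact ENNReal.toReal_mono hI_ne_top hfinal

end ChuAux

/-- Chu's lemma: for any probability space, measurable set `A`, and sub-σ-algebras `m₁, m₂`,
`∫ 𝟙_A · E(𝟙_A | m₁) · E(𝟙_A | m₂) dμ ≥ μ(A)³`. -/
theorem stmt14 {X : Type*} [m : MeasurableSpace X] (μ : Measure X) [IsProbabilityMeasure μ]
    (A : Set X) (hA : MeasurableSet A) (m₁ m₂ : MeasurableSpace X) (h₁ : m₁ ≤ m) (h₂ : m₂ ≤ m) :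
    (μ A).toReal ^ 3 ≤
      ∫ x, A.indicator (fun _ => (1 : ℝ)) x
        * (μ[A.indicator (fun _ => (1 : ℝ)) | m₁]) x
        * (μ[A.indicator (fun _ => (1 : ℝ)) | m₂]) x ∂μ :=
  chu_main hA h₁ h₂
end

section
/- Let T be the (1/2,1/2)-Bernoulli shift on X = {0,1}^ℤ with product measure μ, let R: X → X be the map that fixes the 0th coordinate and flips all other coordinates (R x)(n) = 1 − x(n) for n ≠ 0, (R x)(0) = x(0), and let S = R⁻¹ T R. Let A = {x ∈ X : x(0) = 1}. Then μ(T^{−n} A ∩ S^{−n} A) = 0 for every n ∈ ℕ, n ≥ 1. -/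
open MeasureTheory

private def Tsh : (ℤ → Bool) → (ℤ → Bool) := fun x => fun k => x (k + 1)
private def Rfl : (ℤ → Bool) → (ℤ → Bool) :=
  fun x => fun m : ℤ => if m = 0 then x 0 else !(x m)

private lemma T_iter (n : ℕ) (x : ℤ → Bool) (k : ℤ) : (Tsh^[n] x) k = x (k + n) := by
  induction n generalizing x k with
  | zero => simp
  | succ n ih =>
    rw [Function.iterate_succ_apply, ih]
    simp only [Tsh]
    congr 1
    push_cast
    ring

private lemma S_apply (x : ℤ → Bool) (m : ℤ) :
    (Rfl ∘ Tsh ∘ Rfl) x m = if m = 0 then !(x 1) else if m = -1 then !(x 0) else x (m + 1) := by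
  simp only [Function.comp_apply, Rfl, Tsh]
  by_cases h0 : m = 0
  · subst h0; norm_num
  · simp only [h0, if_false]
    by_cases h1 : m = -1
    · subst h1; norm_num
    · have : m + 1 ≠ 0 := by omega
      simp [this, h1]

private lemma S_iter (n : ℕ) (hn : 1 ≤ n) (x : ℤ → Bool) :
    ((Rfl ∘ Tsh ∘ Rfl)^[n] x) 0 = !(x n) := by
  induction n generalizing x with
  | zero => omega
  | succ n ih =>
    rcases Nat.eq_or_lt_of_le hn with h | h
    · rw [← h]
      simpa using S_apply x 0
    · have hn' : 1 ≤ n := by omega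
      rw [Function.iterate_succ_apply, ih hn']
      rw [S_apply]
      have h1 : (n : ℤ) ≠ 0 := by omega
      have h2 : (n : ℤ) ≠ -1 := by omega
      simp only [h1, h2, if_false]
      norm_cast

/-- Furstenberg's example: for the Bernoulli `(1/2,1/2)` shift `T` on `{0,1}^ℤ`, the coordinate
flip `R` fixing the 0th coordinate, `S = R⁻¹ T R`, and `A = {x : x(0) = 1}`, one has
`μ(T^{-n}A ∩ S^{-n}A) = 0` for every `n ≥ 1`. -/
theorem stmt15 (μ : Measure (ℤ → Bool))
    (hcyl : ∀ (t : Finset ℤ) (v : ℤ → Bool),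
      μ {x | ∀ i ∈ t, x i = v i} = (1 / 2 : ENNReal) ^ t.card) :
    (fun x : ℤ → Bool => fun n : ℤ => if n = 0 then x 0 else !(x n)) ∘
        (fun x : ℤ → Bool => fun n : ℤ => if n = 0 then x 0 else !(x n)) = id ∧
    ∀ n : ℕ, 1 ≤ n →
      μ (((fun x : ℤ → Bool => fun k => x (k + 1))^[n]) ⁻¹' {x | x 0 = true} ∩
          (((fun x : ℤ → Bool => fun m : ℤ => if m = 0 then x 0 else !(x m)) ∘
            (fun x : ℤ → Bool => fun k => x (k + 1)) ∘
            (fun x : ℤ → Bool => fun m : ℤ => if m = 0 then x 0 else !(x m)))^[n])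
              ⁻¹' {x | x 0 = true}) = 0 := by
  constructor
  · funext x m
    simp only [Function.comp_apply]
    by_cases h : m = 0 <;> simp [h]
  · intro n hn
    have hempty : ((Tsh^[n]) ⁻¹' {x | x 0 = true} ∩
        ((Rfl ∘ Tsh ∘ Rfl)^[n]) ⁻¹' {x | x 0 = true}) = (∅ : Set (ℤ → Bool)) := by
      ext x
      simp only [Set.mem_inter_iff, Set.mem_preimage, Set.mem_setOf_eq, Set.mem_empty_iff_false,
        iff_false, not_and]
      intro hT
      rw [T_iter] at hT
      rw [S_iter n hn x]
      simp only [zero_add] at hT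
      simp [hT]
    show μ ((Tsh^[n]) ⁻¹' {x | x 0 = true} ∩
        ((Rfl ∘ Tsh ∘ Rfl)^[n]) ⁻¹' {x | x 0 = true}) = 0
    rw [hempty]
    exact measure_empty
end

section
/- Let T be the (s,s,1−2s)-Bernoulli shift on X = {0,1,2}^ℤ with product measure μ (0 < s < 1/2), let π be a permutation of ℤ with π(0) = 0, and define ψ_π: X → X by (ψ_π x)(0) = x(0), and for n ≠ 0: (ψ_π x)(n) = 1 − x(π(n)) if x(π(n)) ∈ {0,1}, and (ψ_π x)(n) = 2 if x(π(n)) = 2. Then ψ_π is an invertible μ-preserving map with inverse ψ_{π⁻¹}, and for S := ψ_π⁻¹ T ψ_π, A := {x : x(0) = 1}, and injective sequences a, b: ℕ → ℤ∖{0}, one has for each n: μ(T^{−a(n)}A ∩ S^{−b(n)}A) = 0 if π(b(n)) = a(n), and = s² if π(b(n)) ≠ a(n). -/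
open MeasureTheory

/-- The map flipping the symbols `0` and `1` of `{0,1,2}` and fixing `2`. -/
def flip3 : Fin 3 → Fin 3 := fun v => if v = 0 then 1 else if v = 1 then 0 else 2

/-- For a permutation `σ` of `ℤ`, the map `ψ_σ` on `{0,1,2}^ℤ` fixing the 0th coordinate and
flipping `0`/`1` at the coordinate `σ(n)` for `n ≠ 0`. -/
def psiMap (σ : ℤ → ℤ) (x : ℤ → Fin 3) : ℤ → Fin 3 :=
  fun n => if n = 0 then x 0 else flip3 (x (σ n))

/-- The shift on `{0,1,2}^ℤ` as a bijection. -/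
def shift3 : Equiv.Perm (ℤ → Fin 3) :=
  (Equiv.addRight (1 : ℤ)).symm.arrowCongr (Equiv.refl (Fin 3))

lemma flip3_flip3 : ∀ v, flip3 (flip3 v) = v := by decide

lemma flip3_eq_iff (y v : Fin 3) : flip3 y = v ↔ y = flip3 v := by
  constructor
  · rintro rfl; rw [flip3_flip3]
  · rintro rfl; rw [flip3_flip3]

lemma psiMap_zero (σ : ℤ → ℤ) (x : ℤ → Fin 3) : psiMap σ x 0 = x 0 := by simp [psiMap]

lemma psiMap_leftInv (π : Equiv.Perm ℤ) (hπ0 : π 0 = 0) :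
    Function.LeftInverse (psiMap ⇑π⁻¹) (psiMap ⇑π) := by
  intro x; funext n
  by_cases hn : n = 0
  · subst hn; simp [psiMap]
  · have h1 : π⁻¹ n ≠ 0 := fun h =>
      hn (by rw [← hπ0, ← h, Equiv.Perm.inv_def, Equiv.apply_symm_apply])
    simp [psiMap, hn, show π.symm n ≠ 0 from h1, flip3_flip3]

lemma shift3_apply (x : ℤ → Fin 3) (m : ℤ) : shift3 x m = x (m + 1) := rfl

lemma shift3_inv_apply (x : ℤ → Fin 3) (m : ℤ) : shift3⁻¹ x m = x (m - 1) := rfl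

lemma shift3_zpow (k : ℤ) : ∀ (x : ℤ → Fin 3) (m : ℤ), (shift3 ^ k) x m = x (m + k) := by
  induction k using Int.induction_on with
  | zero => intro x m; simp
  | succ n ih =>
      intro x m
      rw [zpow_add_one, Equiv.Perm.mul_apply, ih (shift3 x) m, shift3_apply]
      congr 1; ring
  | pred n ih =>
      intro x m
      rw [zpow_sub_one, Equiv.Perm.mul_apply, ih (shift3⁻¹ x) m, shift3_inv_apply]
      congr 1; ring

/-- Cylinder sets. -/
def cylSet : Set (Set (ℤ → Fin 3)) :=
  {S | ∃ (t : Finset ℤ) (v : ℤ → Fin 3), S = {x | ∀ i ∈ t, x i = v i}}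

lemma measurableSet_cyl (t : Finset ℤ) (v : ℤ → Fin 3) :
    MeasurableSet {x : ℤ → Fin 3 | ∀ i ∈ t, x i = v i} := by
  have h : {x : ℤ → Fin 3 | ∀ i ∈ t, x i = v i} = ⋂ i ∈ t, (fun x : ℤ → Fin 3 => x i) ⁻¹' {v i} := by
    ext x; simp
  rw [h]
  exact MeasurableSet.biInter t.countable_toSet
    (fun i _ => (measurable_pi_apply i) (measurableSet_singleton (v i)))

lemma measurable_psiMap (σ : ℤ → ℤ) : Measurable (psiMap σ) := by
  rw [measurable_pi_iff]; intro n
  by_cases hn : n = 0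
  · subst hn
    simp only [psiMap, if_pos rfl]
    exact measurable_pi_apply 0
  · simp only [psiMap, if_neg hn]
    exact (measurable_of_countable flip3).comp (measurable_pi_apply (σ n))

lemma isPiSystem_cyl : IsPiSystem cylSet := by
  rintro S1 ⟨t1, v1, rfl⟩ S2 ⟨t2, v2, rfl⟩ hne
  obtain ⟨y, hy1, hy2⟩ := hne
  refine ⟨t1 ∪ t2, fun i => if i ∈ t1 then v1 i else v2 i, ?_⟩
  ext x
  simp only [Set.mem_inter_iff, Set.mem_setOf_eq, Finset.mem_union]
  constructor
  · rintro ⟨hx1, hx2⟩ i hi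
    by_cases h : i ∈ t1
    · simp [h, hx1 i h]
    · have hi2 : i ∈ t2 := hi.resolve_left h
      simp [h, hx2 i hi2]
  · intro hx
    constructor
    · intro i hi
      have := hx i (Or.inl hi); rwa [if_pos hi] at this
    · intro i hi
      have := hx i (Or.inr hi)
      by_cases h : i ∈ t1
      · rw [if_pos h] at this
        rw [this, ← hy1 i h, hy2 i hi]
      · rwa [if_neg h] at this

lemma generateFrom_cyl :
    (inferInstance : MeasurableSpace (ℤ → Fin 3)) = MeasurableSpace.generateFrom cylSet := by
  refine le_antisymm ?_ (MeasurableSpace.generateFrom_le ?_)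
  · have h : ∀ i : ℤ,
        @Measurable _ _ (MeasurableSpace.generateFrom cylSet) _ (fun x : ℤ → Fin 3 => x i) := by
      intro i S _
      have hS : (fun x : ℤ → Fin 3 => x i) ⁻¹' S = ⋃ c ∈ S, {x : ℤ → Fin 3 | x i = c} := by
        ext x; simp
      rw [hS]
      exact MeasurableSet.biUnion S.to_countable
        (fun c _ => MeasurableSpace.measurableSet_generateFrom
          ⟨{i}, fun _ => c, by ext x; simp⟩)
    exact iSup_le fun i => (h i).comap_le
  · rintro S ⟨t, v, rfl⟩
    exact measurableSet_cyl t v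

/-- The `(s,s,1-2s)`-Bernoulli counterexample: `ψ_π` is an invertible measure preserving map
with inverse `ψ_{π⁻¹}`, and with `S = ψ_π⁻¹ T ψ_π` and `A = {x : x(0) = 1}` one has
`μ(T^{-a(n)}A ∩ S^{-b(n)}A) = 0` when `π(b(n)) = a(n)` and `= s²` otherwise. -/
theorem stmt16 (s : ℝ) (hs : 0 < s) (hs' : s < 1 / 2) (μ : Measure (ℤ → Fin 3))
    (hcyl : ∀ (t : Finset ℤ) (v : ℤ → Fin 3),
      μ {x | ∀ i ∈ t, x i = v i}
        = ∏ i ∈ t, (![ENNReal.ofReal s, ENNReal.ofReal s, ENNReal.ofReal (1 - 2 * s)] (v i)))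
    (π : Equiv.Perm ℤ) (hπ0 : π 0 = 0)
    (a b : ℕ → ℤ) (ha : Function.Injective a) (hb : Function.Injective b)
    (ha0 : ∀ n, a n ≠ 0) (hb0 : ∀ n, b n ≠ 0) :
    Function.LeftInverse (psiMap ⇑π⁻¹) (psiMap ⇑π) ∧
    Function.RightInverse (psiMap ⇑π⁻¹) (psiMap ⇑π) ∧
    MeasurePreserving (psiMap ⇑π) μ μ ∧
    ∀ n : ℕ,
      μ ((⇑(shift3 ^ a n)) ⁻¹' {x | x 0 = 1} ∩
          psiMap ⇑π ⁻¹' ((⇑(shift3 ^ b n)) ⁻¹' (psiMap ⇑π⁻¹ ⁻¹' {x | x 0 = 1})))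
        = if π (b n) = a n then 0 else ENNReal.ofReal (s ^ 2) := by
  have hπ0' : π⁻¹ 0 = 0 := by
    conv_lhs => rw [← hπ0]
    exact π.symm_apply_apply 0
  have hM : ∀ c : Fin 3,
      (![ENNReal.ofReal s, ENNReal.ofReal s, ENNReal.ofReal (1 - 2 * s)] (flip3 c))
        = ![ENNReal.ofReal s, ENNReal.ofReal s, ENNReal.ofReal (1 - 2 * s)] c := by
    intro c; fin_cases c <;> rfl
  have hmeas := measurable_psiMap (⇑π)
  have huniv : μ Set.univ = 1 := by
    have h := hcyl ∅ (fun _ => 0)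
    simpa using h
  have : IsFiniteMeasure μ := ⟨by rw [huniv]; exact ENNReal.one_lt_top⟩
  have hmap : μ.map (psiMap ⇑π) = μ := by
    refine (ext_of_generate_finite cylSet generateFrom_cyl isPiSystem_cyl ?_ ?_).symm
    · rintro S ⟨t, v, rfl⟩
      rw [Measure.map_apply hmeas (measurableSet_cyl t v)]
      set w : ℤ → Fin 3 := fun j => if π⁻¹ j = 0 then v 0 else flip3 (v (π⁻¹ j)) with hw
      have hpre : (psiMap ⇑π) ⁻¹' {x | ∀ i ∈ t, x i = v i}
          = {x | ∀ j ∈ t.image ⇑π, x j = w j} := by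
        ext x
        simp only [Set.mem_preimage, Set.mem_setOf_eq]
        rw [Finset.forall_mem_image]
        refine forall₂_congr fun i _ => ?_
        by_cases hi : i = 0
        · subst hi
          rw [hπ0]
          simp [psiMap, hw, show π.symm 0 = 0 from hπ0']
        · have hπi : π⁻¹ (π i) = i := π.symm_apply_apply i
          simp only [psiMap, if_neg hi, hw, hπi]
          exact flip3_eq_iff _ _
      rw [hpre, hcyl, hcyl,
        Finset.prod_image (fun i _ j _ h => π.injective h)]
      refine Finset.prod_congr rfl fun i _ => ?_
      by_cases hi : i = 0
      · subst hi; rw [hπ0]; simp [hw, show π.symm 0 = 0 from hπ0']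
      · have hπi : π⁻¹ (π i) = i := π.symm_apply_apply i
        simp only [hw, hπi, if_neg hi]
        exact (hM (v i)).symm
    · rw [Measure.map_apply hmeas MeasurableSet.univ, Set.preimage_univ]
  refine ⟨psiMap_leftInv π hπ0, ?_, ⟨hmeas, hmap⟩, ?_⟩
  · have h := psiMap_leftInv π⁻¹ hπ0'
    rwa [inv_inv] at h
  · intro n
    have hset : (⇑(shift3 ^ a n)) ⁻¹' {x | x 0 = 1} ∩
        psiMap ⇑π ⁻¹' ((⇑(shift3 ^ b n)) ⁻¹' (psiMap ⇑π⁻¹ ⁻¹' {x | x 0 = 1}))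
        = {x : ℤ → Fin 3 | x (a n) = 1 ∧ x (π (b n)) = 0} := by
      ext x
      simp only [Set.mem_inter_iff, Set.mem_preimage, Set.mem_setOf_eq]
      rw [shift3_zpow, psiMap_zero, shift3_zpow, zero_add, zero_add]
      refine and_congr Iff.rfl ?_
      simp only [psiMap, if_neg (hb0 n)]
      rw [flip3_eq_iff]
      rfl
    rw [hset]
    by_cases hc : π (b n) = a n
    · rw [if_pos hc]
      have he : {x : ℤ → Fin 3 | x (a n) = 1 ∧ x (π (b n)) = 0} = ∅ := by
        ext x
        simp only [Set.mem_setOf_eq, Set.mem_empty_iff_false, iff_false, not_and]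
        intro h1
        rw [hc, h1]
        decide
      rw [he]; exact measure_empty
    · rw [if_neg hc]
      have hv : {x : ℤ → Fin 3 | x (a n) = 1 ∧ x (π (b n)) = 0}
          = {x | ∀ i ∈ ({a n, π (b n)} : Finset ℤ),
              x i = (fun j => if j = a n then (1 : Fin 3) else 0) i} := by
        ext x
        simp only [Set.mem_setOf_eq, Finset.mem_insert, Finset.mem_singleton]
        constructor
        · rintro ⟨h1, h2⟩ i hi
          rcases hi with rfl | rfl
          · simp [h1]
          · rw [if_neg hc]; exact h2
        · intro h
          refine ⟨?_, ?_⟩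
          · have := h (a n) (Or.inl rfl); simpa using this
          · have := h (π (b n)) (Or.inr rfl); rwa [if_neg hc] at this
      have hne : a n ≠ π (b n) := fun h => hc h.symm
      rw [hv, hcyl, Finset.prod_pair hne]
      simp only [if_neg hc, eq_self_iff_true, if_true]
      rw [show (![ENNReal.ofReal s, ENNReal.ofReal s, ENNReal.ofReal (1 - 2 * s)] 1)
            = ENNReal.ofReal s from rfl,
          show (![ENNReal.ofReal s, ENNReal.ofReal s, ENNReal.ofReal (1 - 2 * s)] 0)
            = ENNReal.ofReal s from rfl,
          ← ENNReal.ofReal_mul hs.le, pow_two]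
end

section
/- Let a, b: ℕ → ℤ∖{0} be injective sequences each missing infinitely many integers, and let F ⊆ ℕ. Then there exists a permutation π of ℤ with π(0) = 0 such that π(b(n)) = a(n) for all n ∈ F and π(b(n)) ≠ a(n) for all n ∉ F. -/
/-- Given injective sequences `a, b : ℕ → ℤ∖{0}` each missing infinitely many integers, and any
`F ⊆ ℕ`, there is a permutation `π` of `ℤ` fixing `0` with `π(b(n)) = a(n)` exactly when
`n ∈ F`. -/
theorem stmt17 (a b : ℕ → ℤ) (ha : Function.Injective a) (hb : Function.Injective b)
    (ha0 : ∀ n, a n ≠ 0) (hb0 : ∀ n, b n ≠ 0)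
    (ha' : (Set.range a)ᶜ.Infinite) (hb' : (Set.range b)ᶜ.Infinite) (F : Set ℕ) :
    ∃ π : Equiv.Perm ℤ, π 0 = 0 ∧
      (∀ n ∈ F, π (b n) = a n) ∧ (∀ n ∉ F, π (b n) ≠ a n) := by
  classical
  -- an injective enumeration of values outside `range a` and nonzero
  have hAc : ((Set.range a)ᶜ \ {0} : Set ℤ).Infinite := ha'.diff (Set.finite_singleton 0)
  set c : ℕ → ℤ := fun n => (Set.Infinite.natEmbedding _ hAc n : ℤ) with hc_def
  have hc_inj : Function.Injective c :=
    Subtype.val_injective.comp (Set.Infinite.natEmbedding _ hAc).injective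
  have hc_mem : ∀ n, c n ∈ ((Set.range a)ᶜ \ {0} : Set ℤ) := fun n => (Set.Infinite.natEmbedding _ hAc n).2
  have hcA : ∀ n, c n ∉ Set.range a := fun n => (hc_mem n).1
  have hc0 : ∀ n, c n ≠ 0 := fun n => (hc_mem n).2
  -- the target sequence
  set g : ℕ → ℤ := fun n => if n ∈ F then a n else c (2 * n) with hg_def
  have hg0 : ∀ n, g n ≠ 0 := by
    intro n; simp only [hg_def]; split <;> [exact ha0 n; exact hc0 _]
  have hg_inj : Function.Injective g := by
    intro n m h
    simp only [hg_def] at h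
    split_ifs at h with h1 h2 h2
    · exact ha h
    · exact absurd ⟨n, h⟩ (hcA _)
    · exact absurd ⟨m, h.symm⟩ (hcA _)
    · have := hc_inj h; omega
  set D : Set ℤ := insert 0 (Set.range b) with hD_def
  set T : Set ℤ := insert 0 (Set.range g) with hT_def
  have hDc : Dᶜ.Infinite := by
    apply (hb'.diff (Set.finite_singleton 0)).mono
    intro x hx
    simp only [hD_def, Set.mem_compl_iff, Set.mem_insert_iff, not_or]
    exact ⟨hx.2, hx.1⟩
  have hTc : Tᶜ.Infinite := by
    refine Set.infinite_of_injective_forall_mem (f := fun n : ℕ => c (2 * n + 1)) ?_ ?_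
    · intro n m h; have := hc_inj h; omega
    · intro n
      simp only [hT_def, Set.mem_compl_iff, Set.mem_insert_iff, Set.mem_range, not_or]
      refine ⟨hc0 _, ?_⟩
      rintro ⟨m, hm⟩
      simp only [hg_def] at hm
      split_ifs at hm with h1
      · exact hcA _ ⟨m, hm⟩
      · have := hc_inj hm; omega
  -- the partial map
  set φ : ℤ → ℤ := fun x =>
    if x = 0 then 0 else if h : x ∈ Set.range b then g (Classical.choose h) else x with hφ_def
  have hφ0 : φ 0 = 0 := by simp [hφ_def]
  have hφb : ∀ n, φ (b n) = g n := by
    intro n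
    have hmem : b n ∈ Set.range b := ⟨n, rfl⟩
    have : Classical.choose hmem = n := hb (Classical.choose_spec hmem)
    simp [hφ_def, hb0 n, hmem, this]
  have hφD : Set.BijOn φ D T := by
    refine ⟨?_, ?_, ?_⟩
    · rintro x (rfl | ⟨n, rfl⟩)
      · rw [hφ0]; exact Set.mem_insert _ _
      · rw [hφb]; exact Set.mem_insert_of_mem _ ⟨n, rfl⟩
    · rintro x (rfl | ⟨n, rfl⟩) y (rfl | ⟨m, rfl⟩) hxy
      · rfl
      · rw [hφ0, hφb] at hxy; exact absurd hxy.symm (hg0 m)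
      · rw [hφ0, hφb] at hxy; exact absurd hxy (hg0 n)
      · rw [hφb, hφb] at hxy; exact congrArg b (hg_inj hxy)
    · rintro y (rfl | ⟨n, rfl⟩)
      · exact ⟨0, Set.mem_insert _ _, hφ0⟩
      · exact ⟨b n, Set.mem_insert_of_mem _ ⟨n, rfl⟩, hφb n⟩
  -- equiv between complements
  haveI : Infinite ↥Dᶜ := hDc.to_subtype
  haveI : Infinite ↥Tᶜ := hTc.to_subtype
  haveI : Encodable ↥Dᶜ := (Set.to_countable _).toEncodable
  haveI : Encodable ↥Tᶜ := (Set.to_countable _).toEncodable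
  haveI : Denumerable ↥Dᶜ := Denumerable.ofEncodableOfInfinite _
  haveI : Denumerable ↥Tᶜ := Denumerable.ofEncodableOfInfinite _
  let e₂ : ↥Dᶜ ≃ ↥Tᶜ := (Denumerable.eqv ↥Dᶜ).trans (Denumerable.eqv ↥Tᶜ).symm
  let e₁ : D ≃ T := hφD.equiv φ
  let π : Equiv.Perm ℤ :=
    (Equiv.Set.sumCompl D).symm.trans ((e₁.sumCongr e₂).trans (Equiv.Set.sumCompl T))
  have hπ : ∀ x (hx : x ∈ D), π x = φ x := by
    intro x hx
    have h1 : (Equiv.Set.sumCompl D).symm x = Sum.inl ⟨x, hx⟩ := by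
      apply (Equiv.Set.sumCompl D).injective
      simp
    simp only [π, Equiv.trans_apply, h1, Equiv.sumCongr_apply, Sum.map_inl,
      Equiv.Set.sumCompl_apply_inl]
    rfl
  refine ⟨π, ?_, ?_, ?_⟩
  · rw [hπ 0 (Set.mem_insert _ _), hφ0]
  · intro n hn
    rw [hπ (b n) (Set.mem_insert_of_mem _ ⟨n, rfl⟩), hφb]
    simp [hg_def, hn]
  · intro n hn
    rw [hπ (b n) (Set.mem_insert_of_mem _ ⟨n, rfl⟩), hφb]
    simp only [hg_def, hn, if_false]
    intro h
    exact hcA _ ⟨n, h.symm⟩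
end

section
/- Let S be a unipotent m×m integer matrix (so (Sᵗ − id)^m = 0), b ∈ 𝕋^m, and suppose the affine map T x = Sx + b on 𝕋^m is ergodic for Haar measure, equivalently: if ℓ ∈ ℤ^m satisfies (Sᵗ − id)ℓ = 0 and ℓ·b = 0 mod 1, then ℓ = 0. Let k ∈ ℤ^m be non-zero, set m₀ = min{q ∈ ℕ : (Sᵗ − id)^q k = 0}, and let r₁,…,r_{m₀} ∈ ℤ satisfy Σ_{j=1}^{m₀} r_j (Sᵗ−id)^j k = 0 and Σ_{j=1}^{m₀} r_j (Sᵗ−id)^{j−1} k · b = 0 mod 1. Then r_j = 0 for all j. -/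
open MeasureTheory Filter

lemma zdot_sum_smul {m : ℕ} (c : ℕ → ℤ) (v : ℕ → Fin m → ℤ) (s : Finset ℕ) (b : Torus m) :
    zdot (∑ j ∈ s, c j • v j) b = ∑ j ∈ s, c j • zdot (v j) b := by
  unfold zdot
  simp only [Finset.sum_apply, Pi.smul_apply, Finset.sum_smul, smul_eq_mul, mul_smul,
    Finset.smul_sum]
  rw [Finset.sum_comm]

/-- The core algebraic step: with `S` a unipotent integer matrix, `T x = Sx + b` ergodic (in the
form of the standard criterion), `k ≠ 0`, and `m₀ = min{q : (Sᵗ−1)^q k = 0}`, if integers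
`r₁,…,r_{m₀}` satisfy `Σ rⱼ (Sᵗ−1)ʲ k = 0` and `Σ rⱼ (Sᵗ−1)^{j−1} k · b = 0 (mod 1)`, then
all `rⱼ` vanish. -/
theorem stmt18 {m : ℕ} (S : Matrix (Fin m) (Fin m) ℤ) (hS : (S.transpose - 1) ^ m = 0)
    (b : Torus m)
    (herg : ∀ ℓ : Fin m → ℤ, (S.transpose - 1).mulVec ℓ = 0 → zdot ℓ b = 0 → ℓ = 0)
    (k : Fin m → ℤ) (hk : k ≠ 0) (r : ℕ → ℤ)
    (hr1 : ∑ j ∈ Finset.Icc 1 (sInf {q : ℕ | ((S.transpose - 1) ^ q).mulVec k = 0}),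
        r j • ((S.transpose - 1) ^ j).mulVec k = 0)
    (hr2 : ∑ j ∈ Finset.Icc 1 (sInf {q : ℕ | ((S.transpose - 1) ^ q).mulVec k = 0}),
        r j • zdot (((S.transpose - 1) ^ (j - 1)).mulVec k) b = 0) :
    ∀ j ∈ Finset.Icc 1 (sInf {q : ℕ | ((S.transpose - 1) ^ q).mulVec k = 0}), r j = 0 := by
  set A := S.transpose - 1 with hA
  set m₀ := sInf {q : ℕ | (A ^ q).mulVec k = 0} with hm₀
  have hmem : (A ^ m₀).mulVec k = 0 := by
    have : m₀ ∈ {q : ℕ | (A ^ q).mulVec k = 0} :=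
      Nat.sInf_mem ⟨m, by simp [Set.mem_setOf_eq, hS]⟩
    exact this
  have h1le : 1 ≤ m₀ := by
    rcases Nat.eq_zero_or_pos m₀ with h | h
    · exfalso
      rw [h, pow_zero, Matrix.one_mulVec] at hmem
      exact hk hmem
    · exact h
  -- vanishing of high powers
  have hhigh : ∀ e : ℕ, m₀ ≤ e → (A ^ e).mulVec k = 0 := by
    intro e he
    have : A ^ e = A ^ (e - m₀) * A ^ m₀ := by
      rw [← pow_add]
      congr 1
      omega
    rw [this, ← Matrix.mulVec_mulVec, hmem, Matrix.mulVec_zero]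
  -- the vector ℓ
  set ℓ : Fin m → ℤ := ∑ j ∈ Finset.Icc 1 m₀, r j • (A ^ (j - 1)).mulVec k with hℓ
  -- key: applying any power A^p to ℓ
  have happly : ∀ p : ℕ, (A ^ p).mulVec ℓ
      = ∑ j ∈ Finset.Icc 1 m₀, r j • (A ^ (p + j - 1)).mulVec k := by
    intro p
    rw [hℓ, ← Matrix.mulVecLin_apply, map_sum]
    refine Finset.sum_congr rfl fun j hj => ?_
    rw [_root_.map_smul, Matrix.mulVecLin_apply, Matrix.mulVec_mulVec, ← pow_add]
    have hj1 : 1 ≤ j := (Finset.mem_Icc.mp hj).1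
    have he : p + (j - 1) = p + j - 1 := by omega
    rw [he]
  have hAℓ : A.mulVec ℓ = 0 := by
    have := happly 1
    rw [pow_one] at this
    rw [this, ← hr1]
    refine Finset.sum_congr rfl fun j hj => ?_
    have hj1 : 1 ≤ j := (Finset.mem_Icc.mp hj).1
    have he : 1 + j - 1 = j := by omega
    rw [he]
  have hzℓ : zdot ℓ b = 0 := by
    rw [hℓ, zdot_sum_smul]
    exact hr2
  have hℓ0 : ℓ = 0 := herg ℓ hAℓ hzℓ
  -- nonvanishing of A^(m₀-1) k
  have hv : (A ^ (m₀ - 1)).mulVec k ≠ 0 := by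
    intro h
    have : m₀ - 1 ∈ {q : ℕ | (A ^ q).mulVec k = 0} := h
    have := Nat.sInf_le this
    omega
  obtain ⟨i, hvi⟩ : ∃ i, (A ^ (m₀ - 1)).mulVec k i ≠ 0 := by
    by_contra h
    push_neg at h
    exact hv (funext h)
  -- strong induction
  intro j
  induction j using Nat.strong_induction_on with
  | _ j IH =>
    intro hj
    obtain ⟨hj1, hj2⟩ := Finset.mem_Icc.mp hj
    have hsum : ∑ j' ∈ Finset.Icc 1 m₀, r j' • (A ^ (m₀ - j + j' - 1)).mulVec k = 0 := by
      rw [← happly (m₀ - j), hℓ0, Matrix.mulVec_zero]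
    rw [Finset.sum_eq_single j] at hsum
    · have hexp : m₀ - j + j - 1 = m₀ - 1 := by omega
      rw [hexp] at hsum
      have hcomp : r j * (A ^ (m₀ - 1)).mulVec k i = 0 := by
        have := congrFun hsum i
        simpa using this
      rcases mul_eq_zero.mp hcomp with h | h
      · exact h
      · exact absurd h hvi
    · intro j' hj' hne
      obtain ⟨hj'1, hj'2⟩ := Finset.mem_Icc.mp hj'
      rcases lt_or_gt_of_ne hne with hlt | hgt
      · rw [IH j' hlt (Finset.mem_Icc.mpr ⟨hj'1, hj'2⟩), zero_smul]
      · rw [hhigh (m₀ - j + j' - 1) (by omega), smul_zero]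
    · intro h
      exact absurd hj h
end
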